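/- Let m, n be positive integers and let φ : M_{mn}(ℂ) → M_{mn}(ℂ) be a linear skew RT-symmetric map, i.e. tr(φ(A)·B) = −tr(φ(B)·A) for all A, B ∈ M_{mn}(ℂ). Then det(exp(φ(A ⊕ B))) = det(exp(A ⊕ B)) for all A ∈ M_m(ℂ) and B ∈ M_n(ℂ) if and only if tr₁(φ(I_{mn})) = −m·I_n and tr₂(φ(I_{mn})) = −n·I_m. -/

import Mathlib

/-!
Over `ℂ`, `det (exp X) = exp (tr X)`: `t ↦ det (exp (t • X))` is a differentiable homomorphism
`(ℂ, +) → (ℂ, ·)` whose derivative at `0` is `tr X`, because the derivative of `det` at `1` is the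
trace. Rescaling `(A, B)` to `(t • A, t • B)` therefore turns preservation of `det ∘ exp` on
Kronecker sums into `tr φ(A ⊕ B) = tr (A ⊕ B)`. Skew RT-symmetry gives `tr φ(X) = tr (-φ(1) X)`,
and `tr (P (A ⊕ B)) = tr (tr₂(P) A) + tr (tr₁(P) B)`, so the condition says exactly that `-φ(1)`
and `1` have the same partial traces; those of `1` are `m • 1` and `n • 1`.
-/

open Matrix Kronecker BigOperators

/-- The Kronecker sum `A ⊕ B = A ⊗ Iₙ + Iₘ ⊗ B`. -/
def kronSum {F : Type*} [CommRing F] {m n : ℕ}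
    (A : Matrix (Fin m) (Fin m) F) (B : Matrix (Fin n) (Fin n) F) :
    Matrix (Fin m × Fin n) (Fin m × Fin n) F :=
  A ⊗ₖ (1 : Matrix (Fin n) (Fin n) F) + (1 : Matrix (Fin m) (Fin m) F) ⊗ₖ B

/-- The first partial trace `tr₁(P) = Σⱼ Pⱼⱼ` (sum of the diagonal blocks). -/
def ptrace1 {F : Type*} [AddCommMonoid F] {m n : ℕ}
    (P : Matrix (Fin m × Fin n) (Fin m × Fin n) F) :
    Matrix (Fin n) (Fin n) F :=
  Matrix.of fun a b => ∑ k : Fin m, P (k, a) (k, b)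

/-- The second partial trace `tr₂(P) = Σ_{k,l} tr(P_{kl}) E_{kl}` (blockwise trace). -/
def ptrace2 {F : Type*} [AddCommMonoid F] {m n : ℕ}
    (P : Matrix (Fin m × Fin n) (Fin m × Fin n) F) :
    Matrix (Fin m) (Fin m) F :=
  Matrix.of fun k l => ∑ a : Fin n, P (k, a) (l, a)

theorem Complex.eq_exp_mul_of_map_add {f : ℂ → ℂ} {c : ℂ} (h0 : f 0 = 1)
    (hadd : ∀ s t, f (s + t) = f s * f t) (hc : HasDerivAt f c 0) (t : ℂ) :
    f t = Complex.exp (c * t) := by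
  have hf : ∀ u, HasDerivAt f (f u * c) u := fun u => by
    have h := ((sub_self u ▸ hc).comp_sub_const u u).const_mul (f u)
    refine h.congr_of_eventuallyEq (Filter.Eventually.of_forall fun v => ?_)
    simp [← hadd]
  have hg : ∀ u, HasDerivAt (fun v => f v * Complex.exp (-c * v)) 0 u := fun u => by
    have h := (hf u).mul (((hasDerivAt_id u).const_mul (-c)).cexp)
    exact h.congr_deriv (by simp only [id, mul_one]; ring)
  have hconst := is_const_of_deriv_eq_zero (fun u => (hg u).differentiableAt)
    (fun u => (hg u).deriv) t 0
  simp only [h0, mul_zero, Complex.exp_zero, mul_one] at hconst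
  calc f t = f t * Complex.exp (-c * t) * Complex.exp (c * t) := by
        rw [mul_assoc, ← Complex.exp_add]; simp
    _ = Complex.exp (c * t) := by rw [hconst, one_mul]

theorem Complex.eq_of_forall_exp_mul_eq {x y : ℂ}
    (h : ∀ t : ℂ, Complex.exp (t * x) = Complex.exp (t * y)) : x = y := by
  by_contra hxy
  set t : ℂ := Real.pi * Complex.I / (x - y)
  have hexp : Complex.exp (t * x - t * y) = 1 := by
    rw [Complex.exp_sub, h t, div_self (Complex.exp_ne_zero _)]
  have ht : t * x - t * y = Real.pi * Complex.I := by
    rw [← mul_sub, div_mul_cancel₀ _ (sub_ne_zero.mpr hxy)]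
  rw [ht, Complex.exp_pi_mul_I] at hexp
  norm_num at hexp

namespace Matrix

variable {𝕜 : Type*} [NontriviallyNormedField 𝕜] {n : Type*} [Fintype n] [DecidableEq n]

open Polynomial in
theorem hasDerivAt_det_one_add_smul (M : Matrix n n 𝕜) :
    HasDerivAt (fun t : 𝕜 => (1 + t • M).det) M.trace 0 := by
  have h := (det (1 + (X : 𝕜[X]) • M.map C)).hasDerivAt 0
  rw [derivative_det_one_add_X_smul] at h
  refine h.congr_of_eventuallyEq (Filter.Eventually.of_forall fun t => ?_)
  simp only [eval_det]
  congr 1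
  ext i j
  simp [Matrix.one_apply, mul_comm]

-- Matrices carry no global norm; any choice induces the product topology, which is all that
-- the statements below see.
attribute [local instance] Matrix.linftyOpNormedRing Matrix.linftyOpNormedAlgebra

theorem differentiable_det : Differentiable 𝕜 (fun M : Matrix n n 𝕜 => M.det) := by
  simp_rw [det_apply]
  fun_prop

theorem _root_.HasDerivAt.det_of_eq_one {γ : 𝕜 → Matrix n n 𝕜} {M : Matrix n n 𝕜}
    (hγ : HasDerivAt γ M 0) (hγ0 : γ 0 = 1) :
    HasDerivAt (fun t => (γ t).det) M.trace 0 := by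
  have hdet := (differentiable_det (𝕜 := 𝕜) (n := n) 1).hasFDerivAt
  have hline : HasDerivAt (fun t : 𝕜 => 1 + t • M) M 0 := by
    have h := ((hasDerivAt_id (0 : 𝕜)).smul_const M).const_add (1 : Matrix n n 𝕜)
    rw [one_smul] at h
    exact h
  have hD : fderiv 𝕜 (fun M : Matrix n n 𝕜 => M.det) 1 M = M.trace :=
    (hdet.comp_hasDerivAt_of_eq 0 hline (by simp)).unique (hasDerivAt_det_one_add_smul M)
  exact hD ▸ hdet.comp_hasDerivAt_of_eq 0 hγ hγ0.symm

theorem det_exp (A : Matrix n n ℂ) : (NormedSpace.exp A).det = Complex.exp A.trace := by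
  have hexp : HasDerivAt (fun t : ℂ => NormedSpace.exp (t • A)) A 0 := by
    have h := hasDerivAt_exp_smul_const (𝕂 := ℂ) A 0
    rwa [zero_smul, NormedSpace.exp_zero, one_mul] at h
  have hadd : ∀ s t : ℂ, (NormedSpace.exp ((s + t) • A)).det =
      (NormedSpace.exp (s • A)).det * (NormedSpace.exp (t • A)).det := fun s t => by
    rw [add_smul, exp_add_of_commute _ _ (((Commute.refl A).smul_left s).smul_right t), det_mul]
  simpa using Complex.eq_exp_mul_of_map_add (by simp) hadd (hexp.det_of_eq_one (by simp)) 1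

end Matrix

section PartialTrace

variable {F : Type*} {m n : ℕ}

theorem ptrace1_neg [AddCommGroup F] (P : Matrix (Fin m × Fin n) (Fin m × Fin n) F) :
    ptrace1 (-P) = -ptrace1 P := by
  ext a b
  simp [ptrace1]

theorem ptrace2_neg [AddCommGroup F] (P : Matrix (Fin m × Fin n) (Fin m × Fin n) F) :
    ptrace2 (-P) = -ptrace2 P := by
  ext k l
  simp [ptrace2]

theorem ptrace1_one [Semiring F] :
    ptrace1 (1 : Matrix (Fin m × Fin n) (Fin m × Fin n) F) = (m : F) • 1 := by
  ext a b
  by_cases h : a = b <;> simp [ptrace1, Matrix.one_apply, h]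

theorem ptrace2_one [Semiring F] :
    ptrace2 (1 : Matrix (Fin m × Fin n) (Fin m × Fin n) F) = (n : F) • 1 := by
  ext k l
  by_cases h : k = l <;> simp [ptrace2, Matrix.one_apply, h]

theorem trace_mul_kronecker_one [Semiring F] (P : Matrix (Fin m × Fin n) (Fin m × Fin n) F)
    (A : Matrix (Fin m) (Fin m) F) :
    (P * (A ⊗ₖ (1 : Matrix (Fin n) (Fin n) F))).trace = (ptrace2 P * A).trace := by
  simp only [Matrix.trace, Matrix.diag, Matrix.mul_apply, ptrace2, Matrix.kroneckerMap_apply,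
    Matrix.of_apply, Matrix.one_apply, mul_ite, mul_one, mul_zero, Finset.sum_mul,
    Fintype.sum_prod_type, Finset.sum_ite_eq', Finset.mem_univ, if_true]
  exact Finset.sum_congr rfl fun k _ => Finset.sum_comm

theorem trace_mul_one_kronecker [Semiring F] (P : Matrix (Fin m × Fin n) (Fin m × Fin n) F)
    (B : Matrix (Fin n) (Fin n) F) :
    (P * ((1 : Matrix (Fin m) (Fin m) F) ⊗ₖ B)).trace = (ptrace1 P * B).trace := by
  simp only [Matrix.trace, Matrix.diag, Matrix.mul_apply, ptrace1, Matrix.kroneckerMap_apply,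
    Matrix.of_apply, Matrix.one_apply, ite_mul, one_mul, zero_mul, Finset.sum_mul,
    Fintype.sum_prod_type, mul_ite, mul_zero]
  conv_lhs => enter [2, x, 2, x1]; rw [Finset.sum_comm]
  simp only [Finset.sum_ite_eq', Finset.mem_univ, if_true]
  rw [Finset.sum_comm]
  exact Finset.sum_congr rfl fun a _ => Finset.sum_comm

end PartialTrace

section KroneckerSum

variable {F : Type*} [CommRing F] {m n : ℕ}

theorem kronSum_smul (t : F) (A : Matrix (Fin m) (Fin m) F) (B : Matrix (Fin n) (Fin n) F) :
    kronSum (t • A) (t • B) = t • kronSum A B := by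
  simp [kronSum, Matrix.smul_kronecker, Matrix.kronecker_smul, smul_add]

theorem trace_mul_kronSum (P : Matrix (Fin m × Fin n) (Fin m × Fin n) F)
    (A : Matrix (Fin m) (Fin m) F) (B : Matrix (Fin n) (Fin n) F) :
    (P * kronSum A B).trace = (ptrace2 P * A).trace + (ptrace1 P * B).trace := by
  rw [kronSum, Matrix.mul_add, Matrix.trace_add, trace_mul_kronecker_one, trace_mul_one_kronecker]

theorem forall_trace_mul_kronSum_eq_iff (P Q : Matrix (Fin m × Fin n) (Fin m × Fin n) F) :
    (∀ A B, (P * kronSum A B).trace = (Q * kronSum A B).trace) ↔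
      ptrace1 P = ptrace1 Q ∧ ptrace2 P = ptrace2 Q := by
  simp only [trace_mul_kronSum]
  refine ⟨fun h => ⟨ext_iff_trace_mul_right.2 fun B => ?_, ext_iff_trace_mul_right.2 fun A => ?_⟩,
    fun ⟨h1, h2⟩ A B => by rw [h1, h2]⟩
  · simpa using h 0 B
  · simpa using h A 0

end KroneckerSum

theorem det_exp_kronSum_preserved_iff_of_skew_rt_symmetric_general
    {m n : ℕ}
    (φ : Matrix (Fin m × Fin n) (Fin m × Fin n) ℂ →ₗ[ℂ]
         Matrix (Fin m × Fin n) (Fin m × Fin n) ℂ)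
    (hskew : ∀ A B : Matrix (Fin m × Fin n) (Fin m × Fin n) ℂ,
        (φ A * B).trace = -((φ B * A).trace)) :
    (∀ (A : Matrix (Fin m) (Fin m) ℂ) (B : Matrix (Fin n) (Fin n) ℂ),
        (NormedSpace.exp (φ (kronSum A B))).det = (NormedSpace.exp (kronSum A B)).det) ↔
      (ptrace1 (φ 1) = -((m : ℂ) • (1 : Matrix (Fin n) (Fin n) ℂ)) ∧
       ptrace2 (φ 1) = -((n : ℂ) • (1 : Matrix (Fin m) (Fin m) ℂ))) := by
  have htrace : ∀ X, (φ X).trace = (-φ 1 * X).trace := fun X => by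
    simpa [Matrix.neg_mul] using hskew X 1
  calc (∀ A B, (NormedSpace.exp (φ (kronSum A B))).det = (NormedSpace.exp (kronSum A B)).det)
      ↔ ∀ A B, (φ (kronSum A B)).trace = (kronSum A B).trace := by
        simp only [Matrix.det_exp]
        refine ⟨fun h A B => Complex.eq_of_forall_exp_mul_eq fun t => ?_, fun h A B => by rw [h]⟩
        simpa [kronSum_smul, Matrix.trace_smul] using h (t • A) (t • B)
    _ ↔ ∀ A B, (-φ 1 * kronSum A B).trace = (1 * kronSum A B).trace := by
        simp only [htrace, Matrix.one_mul]
    _ ↔ ptrace1 (-φ 1) = ptrace1 1 ∧ ptrace2 (-φ 1) = ptrace2 1 :=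
        forall_trace_mul_kronSum_eq_iff _ _
    _ ↔ _ := by simp only [ptrace1_neg, ptrace2_neg, ptrace1_one, ptrace2_one, neg_eq_iff_eq_neg]

/-- Theorem 4.3: a skew RT-symmetric linear map `φ` on `M_{mn}(ℂ)` (i.e.
`tr(φ(A)B) = −tr(φ(B)A)` for all `A, B`) preserves the determinant of `exp` of all
Kronecker sums iff `tr₁(φ(I)) = −m·Iₙ` and `tr₂(φ(I)) = −n·Iₘ`. -/
theorem det_exp_kronSum_preserved_iff_of_skew_rt_symmetric
    {m n : ℕ} (hm : 0 < m) (hn : 0 < n)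
    (φ : Matrix (Fin m × Fin n) (Fin m × Fin n) ℂ →ₗ[ℂ]
         Matrix (Fin m × Fin n) (Fin m × Fin n) ℂ)
    (hskew : ∀ A B : Matrix (Fin m × Fin n) (Fin m × Fin n) ℂ,
        (φ A * B).trace = -((φ B * A).trace)) :
    (∀ (A : Matrix (Fin m) (Fin m) ℂ) (B : Matrix (Fin n) (Fin n) ℂ),
        (NormedSpace.exp (φ (kronSum A B))).det = (NormedSpace.exp (kronSum A B)).det) ↔
      (ptrace1 (φ 1) = -((m : ℂ) • (1 : Matrix (Fin n) (Fin n) ℂ)) ∧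
       ptrace2 (φ 1) = -((n : ℂ) • (1 : Matrix (Fin m) (Fin m) ℂ))) :=
  det_exp_kronSum_preserved_iff_of_skew_rt_symmetric_general φ hskew
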